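/- For a positive integer N, the canonical digit at position -1 satisfies c_{-1}(N) = 1 if and only if N = 3⌊nφ⌋ + n + 1 for some integer n ≥ 1. -/

import Mathlib

noncomputable section

attribute [local instance] Classical.propDecidable

/-- The golden mean φ = (1+√5)/2. -/
def goldenPhi : ℝ := (1 + Real.sqrt 5) / 2

/-- `c` is a phi-representation of `N`: a finitely supported digit function
`c : ℤ → ℕ` with digits ≤ 1 such that `N = ∑ i, c i * φ ^ i`. -/
def IsPhiRep (N : ℕ) (c : ℤ →₀ ℕ) : Prop :=
  (∀ i, c i ≤ 1) ∧ (c.sum fun i a => (a : ℝ) * goldenPhi ^ i) = N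

/-- Bergman representation: no two consecutive digits equal 1. -/
def IsBergman (N : ℕ) (c : ℤ →₀ ℕ) : Prop :=
  IsPhiRep N c ∧ ∀ i : ℤ, c (i + 1) * c i = 0

/-- Admissible representation: no two consecutive digits equal 1,
except possibly `c 1 = c 0 = 1`. -/
def IsAdmissible (N : ℕ) (c : ℤ →₀ ℕ) : Prop :=
  IsPhiRep N c ∧ ∀ i : ℤ, i ≠ 0 → c (i + 1) * c i = 0

/-- The Bergman representation of `N` (unique when `N ≥ 1`). -/
noncomputable def bergmanRep (N : ℕ) : ℤ →₀ ℕ :=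
  if h : ∃ c, IsBergman N c then h.choose else 0

/-- The canonical representation of `N`: the admissible representation with
`c 1 = c 0 = 1` if such exists, and the Bergman representation otherwise. -/
noncomputable def canonicalRep (N : ℕ) : ℤ →₀ ℕ :=
  if h : ∃ c, IsAdmissible N c ∧ c 1 = 1 ∧ c 0 = 1 then h.choose else bergmanRep N

/-- The Lucas numbers: L 0 = 2, L 1 = 1, L (n+2) = L (n+1) + L n. -/
def lucas : ℕ → ℕ
  | 0 => 2
  | 1 => 1
  | n + 2 => lucas (n + 1) + lucas n

namespace S19
open goldenRatio

lemma gp_eq : goldenPhi = φ := rfl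

lemma phi_sq : φ ^ 2 = φ + 1 := Real.goldenRatio_sq
lemma phi_pos : (0:ℝ) < φ := Real.goldenRatio_pos
lemma phi_ne : (φ:ℝ) ≠ 0 := Real.goldenRatio_ne_zero
lemma psi_ne : (ψ:ℝ) ≠ 0 := Real.goldenConj_ne_zero

lemma sqrt5_bounds : (2.2:ℝ) < Real.sqrt 5 ∧ Real.sqrt 5 < 2.3 := by
  have h5 : (Real.sqrt 5)^2 = 5 := Real.sq_sqrt (by norm_num)
  have h0 : (0:ℝ) ≤ Real.sqrt 5 := Real.sqrt_nonneg 5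
  constructor <;> nlinarith

lemma phi_gt : (1.6:ℝ) < φ := by
  have := sqrt5_bounds.1; unfold Real.goldenRatio; linarith

lemma phi_lt : (φ:ℝ) < 1.65 := by
  have := sqrt5_bounds.2; unfold Real.goldenRatio; linarith

lemma phi_psi : φ + ψ = 1 := Real.goldenRatio_add_goldenConj
lemma phi_mul_psi : φ * ψ = -1 := Real.goldenRatio_mul_goldenConj

lemma abs_psi : |ψ| = φ⁻¹ := by
  rw [Real.inv_goldenRatio, abs_of_neg Real.goldenConj_neg]

lemma zpow_phi_pos (i : ℤ) : 0 < φ ^ i := zpow_pos Real.goldenRatio_pos i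

lemma phi_inv_eq : φ⁻¹ = φ - 1 := by
  rw [Real.inv_goldenRatio]; have := phi_psi; linarith

lemma zpow_neg_one_phi : φ ^ (-1 : ℤ) = φ - 1 := by
  rw [zpow_neg_one, phi_inv_eq]

/-- value of a digit set -/
def v (S : Finset ℤ) : ℝ := ∑ i ∈ S, φ ^ i

/-- conjugate value of a digit set -/
def w (S : Finset ℤ) : ℝ := ∑ i ∈ S, ψ ^ i

def NoAdj (S : Finset ℤ) : Prop := ∀ i ∈ S, i + 1 ∉ S

lemma NoAdj.subset {S T : Finset ℤ} (h : T ⊆ S) (hS : NoAdj S) : NoAdj T :=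
  fun i hi hi1 => hS i (h hi) (h hi1)

lemma v_nonneg (S : Finset ℤ) : 0 ≤ v S :=
  Finset.sum_nonneg fun i _ => (zpow_phi_pos i).le

lemma v_ge_of_mem {S : Finset ℤ} {m : ℤ} (h : m ∈ S) : φ ^ m ≤ v S :=
  Finset.single_le_sum (fun i _ => (zpow_phi_pos i).le) h

lemma zpow_add_two (x : ℝ) (hx : x ≠ 0) (j : ℤ) : x ^ (j + 2) = x ^ j * x ^ 2 := by
  rw [zpow_add₀ hx, zpow_two, sq]

/-- key bound: a no-adjacent set of powers of φ all ≤ k sums to < φ^(k+1) -/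
lemma v_lt : ∀ (n : ℕ) (S : Finset ℤ) (k : ℤ), S.card ≤ n → NoAdj S →
    (∀ i ∈ S, i ≤ k) → v S < φ ^ (k + 1) := by
  intro n
  induction n with
  | zero => intro S k hc _ _
            have : S = ∅ := Finset.card_eq_zero.mp (Nat.le_zero.mp hc)
            subst this; simpa [v] using zpow_phi_pos (k+1)
  | succ n ih =>
    intro S k hc hna hub
    rcases S.eq_empty_or_nonempty with rfl | hne
    · simpa [v] using zpow_phi_pos (k+1)
    · set m := S.max' hne with hm
      have hmS : m ∈ S := S.max'_mem hne
      have hsub : ∀ i ∈ S.erase m, i ≤ m - 2 := by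
        intro i hi
        have hiS := Finset.mem_of_mem_erase hi
        have hile : i ≤ m := S.le_max' i hiS
        have hne1 : i ≠ m := Finset.ne_of_mem_erase hi
        have hne2 : i ≠ m - 1 := by
          intro h; apply hna i hiS; rw [h]; simpa using hmS
        omega
      have hcard : (S.erase m).card ≤ n := by
        have := Finset.card_erase_of_mem hmS; omega
      have hrec := ih (S.erase m) (m - 2) hcard (hna.subset (Finset.erase_subset _ _)) hsub
      have hsplit : v S = φ ^ m + v (S.erase m) := by
        rw [v, v, ← Finset.add_sum_erase _ _ hmS]
      have hmk : m ≤ k := hub m hmS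
      have h1 : φ ^ m + φ ^ (m - 2 + 1) = φ ^ (m + 1) := by
        have e1 : φ ^ (m+1) = φ ^ (m-1) * φ ^ 2 := by
          rw [← zpow_add_two _ phi_ne]; ring_nf
        have e2 : φ ^ m = φ ^ (m-1) * φ := by
          rw [← zpow_add_one₀ phi_ne]; ring_nf
        have e3 : (m:ℤ) - 2 + 1 = m - 1 := by ring
        rw [e1, e2, e3, phi_sq]; ring
      have h2 : φ ^ (m + 1) ≤ φ ^ (k + 1) :=
        zpow_le_zpow_right₀ (by linarith [phi_gt]) (by omega)
      calc v S = φ ^ m + v (S.erase m) := hsplit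
        _ < φ ^ m + φ ^ (m - 2 + 1) := by linarith [hrec]
        _ = φ ^ (m+1) := h1
        _ ≤ φ ^ (k+1) := h2

lemma psi_eq : ψ = -φ⁻¹ := by rw [Real.inv_goldenRatio]; ring

lemma abs_zpow_psi (i : ℤ) : |ψ ^ i| = φ ^ (-i) := by
  have h1 : ψ ^ i = (-1)^i * φ ^ (-i) := by
    rw [psi_eq]
    have : (-φ⁻¹ : ℝ) = (-1) * φ⁻¹ := by ring
    rw [this, mul_zpow, inv_zpow, ← zpow_neg]
  rcases Int.even_or_odd i with he | ho
  · rw [h1, he.neg_one_zpow, one_mul, abs_of_pos (zpow_phi_pos _)]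
  · rw [h1, ho.neg_one_zpow]
    rw [neg_one_mul, abs_neg, abs_of_pos (zpow_phi_pos _)]

/-- key bound: a no-adjacent set of powers of ψ all ≥ k sums to < φ^(1-k) in abs -/
lemma w_abs_lt : ∀ (n : ℕ) (S : Finset ℤ) (k : ℤ), S.card ≤ n → NoAdj S →
    (∀ i ∈ S, k ≤ i) → |w S| < φ ^ (1 - k) := by
  intro n
  induction n with
  | zero => intro S k hc _ _
            have : S = ∅ := Finset.card_eq_zero.mp (Nat.le_zero.mp hc)
            subst this; simpa [w] using zpow_phi_pos (1-k)
  | succ n ih =>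
    intro S k hc hna hlb
    rcases S.eq_empty_or_nonempty with rfl | hne
    · simpa [w] using zpow_phi_pos (1-k)
    · set m := S.min' hne with hm
      have hmS : m ∈ S := S.min'_mem hne
      have hsub : ∀ i ∈ S.erase m, m + 2 ≤ i := by
        intro i hi
        have hiS := Finset.mem_of_mem_erase hi
        have hile : m ≤ i := S.min'_le i hiS
        have hne1 : i ≠ m := Finset.ne_of_mem_erase hi
        have hne2 : i ≠ m + 1 := by
          intro h; exact hna m hmS (h ▸ hiS)
        omega
      have hcard : (S.erase m).card ≤ n := by
        have := Finset.card_erase_of_mem hmS; omega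
      have hrec := ih (S.erase m) (m + 2) hcard (hna.subset (Finset.erase_subset _ _)) hsub
      have hsplit : w S = ψ ^ m + w (S.erase m) := by
        rw [w, w, ← Finset.add_sum_erase _ _ hmS]
      have habs : |w S| ≤ |ψ ^ m| + |w (S.erase m)| := by
        rw [hsplit]; exact abs_add_le _ _
      have h1 : φ ^ (-m) + φ ^ (1 - (m+2)) = φ ^ (1 - m) := by
        have e1 : φ ^ (1-m) = φ ^ (-m-1) * φ ^ 2 := by
          rw [← zpow_add_two _ phi_ne]; ring_nf
        have e2 : φ ^ (-m) = φ ^ (-m-1) * φ := by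
          rw [← zpow_add_one₀ phi_ne]; ring_nf
        have e3 : (1:ℤ) - (m+2) = -m-1 := by ring
        rw [e1, e2, e3, phi_sq]; ring
      have h2 : φ ^ (1-m) ≤ φ ^ (1-k) := by
        refine zpow_le_zpow_right₀ (by linarith [phi_gt]) (by have := hlb m hmS; omega)
      calc |w S| ≤ |ψ ^ m| + |w (S.erase m)| := habs
        _ < φ ^ (-m) + φ ^ (1 - (m+2)) := by
            rw [abs_zpow_psi]; linarith [hrec]
        _ = φ ^ (1-m) := h1
        _ ≤ φ ^ (1-k) := h2

lemma phi_zpow_neg2 : φ ^ (-2:ℤ) = 2 - φ := by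
  have hsq : φ ^ (2:ℤ) = φ + 1 := by rw [zpow_two, ← sq, phi_sq]
  have key : (φ + 1) * (2 - φ) = 1 := by linear_combination (-1 : ℝ) * phi_sq
  have h2 : φ ^ (-2:ℤ) = (φ ^ (2:ℤ))⁻¹ := zpow_neg φ 2
  rw [h2, hsq, inv_eq_of_mul_eq_one_right key]

lemma psi_val : ψ = 1 - φ := by have := phi_psi; linarith

lemma w_split {S : Finset ℤ} {m : ℤ} (h : m ∈ S) : w S = ψ ^ m + w (S.erase m) := by
  rw [w, w, ← Finset.add_sum_erase _ _ h]

lemma v_split {S : Finset ℤ} {m : ℤ} (h : m ∈ S) : v S = φ ^ m + v (S.erase m) := by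
  rw [v, v, ← Finset.add_sum_erase _ _ h]

lemma w_bounds_one {S : Finset ℤ} (hna : NoAdj S) (hlb : ∀ i ∈ S, 1 ≤ i) :
    -1 < w S ∧ w S < φ - 1 := by
  by_cases hm : (1:ℤ) ∈ S
  · have hsplit : w S = ψ + w (S.erase 1) := by
      have := w_split hm; rwa [zpow_one] at this
    have h3 : ∀ i ∈ S.erase 1, 3 ≤ i := by
      intro i hi
      have hiS := Finset.mem_of_mem_erase hi
      have := hlb i hiS
      have hne1 : i ≠ 1 := Finset.ne_of_mem_erase hi
      have hne2 : i ≠ 2 := by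
        intro h
        apply hna 1 hm
        rw [show (1:ℤ)+1 = 2 by ring]
        exact h ▸ hiS
      omega
    have habs := w_abs_lt (S.erase 1).card (S.erase 1) 3 le_rfl
      (hna.subset (Finset.erase_subset _ _)) h3
    rw [show (1:ℤ) - 3 = -2 by ring, phi_zpow_neg2] at habs
    obtain ⟨hb1, hb2⟩ := abs_lt.mp habs
    rw [hsplit, psi_val]
    constructor <;> linarith [phi_gt]
  · have h2 : ∀ i ∈ S, 2 ≤ i := by
      intro i hi; have := hlb i hi
      have : i ≠ 1 := fun h => hm (h ▸ hi)
      omega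
    have habs := w_abs_lt S.card S 2 le_rfl hna h2
    rw [show (1:ℤ) - 2 = -1 by ring, zpow_neg_one_phi] at habs
    obtain ⟨hb1, hb2⟩ := abs_lt.mp habs
    constructor <;> linarith [phi_gt, phi_lt]

lemma w_bounds_zero {S : Finset ℤ} (hna : NoAdj S) (hlb : ∀ i ∈ S, 0 ≤ i) :
    -1 < w S ∧ w S < φ := by
  by_cases hm : (0:ℤ) ∈ S
  · have hsplit : w S = 1 + w (S.erase 0) := by
      have := w_split hm; rwa [zpow_zero] at this
    have h2 : ∀ i ∈ S.erase 0, 2 ≤ i := by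
      intro i hi
      have hiS := Finset.mem_of_mem_erase hi
      have := hlb i hiS
      have hne1 : i ≠ 0 := Finset.ne_of_mem_erase hi
      have hne2 : i ≠ 1 := by intro h; exact hna 0 hm (by rw [zero_add]; exact h ▸ hiS)
      omega
    have habs := w_abs_lt (S.erase 0).card (S.erase 0) 2 le_rfl
      (hna.subset (Finset.erase_subset _ _)) h2
    rw [show (1:ℤ) - 2 = -1 by ring, zpow_neg_one_phi] at habs
    obtain ⟨hb1, hb2⟩ := abs_lt.mp habs
    rw [hsplit]
    constructor <;> linarith [phi_gt, phi_lt]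
  · have h1 : ∀ i ∈ S, 1 ≤ i := by
      intro i hi; have := hlb i hi
      have : i ≠ 0 := fun h => hm (h ▸ hi)
      omega
    have hb := w_bounds_one hna h1
    constructor <;> [exact hb.1; linarith [hb.2, phi_gt]]

lemma w_bounds_exc {S : Finset ℤ} (h0 : (0:ℤ) ∈ S) (h1 : (1:ℤ) ∈ S) (h2 : (2:ℤ) ∉ S)
    (hna : NoAdj (S.erase 0)) (hlb : ∀ i ∈ S, 0 ≤ i) :
    -1 < w S ∧ w S < φ := by
  have h1e : (1:ℤ) ∈ S.erase 0 := Finset.mem_erase.mpr ⟨one_ne_zero, h1⟩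
  have hsplit : w S = 1 + (ψ + w ((S.erase 0).erase 1)) := by
    have e0 := w_split h0
    have e1 := w_split h1e
    rw [zpow_zero] at e0; rw [zpow_one] at e1
    rw [e0, e1]
  have h3 : ∀ i ∈ (S.erase 0).erase 1, 3 ≤ i := by
    intro i hi
    have hi1 := Finset.mem_of_mem_erase hi
    have hiS := Finset.mem_of_mem_erase hi1
    have := hlb i hiS
    have hne1 : i ≠ 1 := Finset.ne_of_mem_erase hi
    have hne0 : i ≠ 0 := Finset.ne_of_mem_erase hi1
    have hne2 : i ≠ 2 := fun h => h2 (h ▸ hiS)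
    omega
  have habs := w_abs_lt _ ((S.erase 0).erase 1) 3 le_rfl
    (hna.subset (Finset.erase_subset _ _)) h3
  rw [show (1:ℤ) - 3 = -2 by ring, phi_zpow_neg2] at habs
  obtain ⟨hb1, hb2⟩ := abs_lt.mp habs
  rw [hsplit, psi_val]
  constructor <;> linarith [phi_gt, phi_lt]

lemma pow_pq : ∀ (k : ℕ), ∃ a b : ℕ, φ ^ (k:ℤ) = a + b * φ ∧ ψ ^ (k:ℤ) = a + b * ψ := by
  intro k
  induction k with
  | zero => exact ⟨1, 0, by norm_num⟩
  | succ k ih =>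
    obtain ⟨a, b, h1, h2⟩ := ih
    refine ⟨b, a + b, ?_, ?_⟩
    · have : φ ^ ((k:ℤ) + 1) = φ ^ (k:ℤ) * φ := zpow_add_one₀ phi_ne _
      push_cast
      rw [this, h1]
      push_cast
      linear_combination (b:ℝ) * phi_sq
    · have : ψ ^ ((k:ℤ) + 1) = ψ ^ (k:ℤ) * ψ := zpow_add_one₀ psi_ne _
      push_cast
      rw [this, h2]
      push_cast
      linear_combination (b:ℝ) * Real.goldenConj_sq

lemma finset_pq (S : Finset ℤ) (hlb : ∀ i ∈ S, 0 ≤ i) :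
    ∃ p q : ℕ, v S = p + q * φ ∧ w S = p + q * ψ := by
  induction S using Finset.induction_on with
  | empty => exact ⟨0, 0, by simp [v, w]⟩
  | @insert a T hnotmem ih =>
    have ha : 0 ≤ a := hlb a (Finset.mem_insert_self a T)
    obtain ⟨p, q, hp, hq⟩ := ih (fun i hi => hlb i (Finset.mem_insert_of_mem hi))
    obtain ⟨a0, b0, ha0, hb0⟩ := pow_pq a.toNat
    rw [Int.toNat_of_nonneg ha] at ha0 hb0
    refine ⟨a0 + p, b0 + q, ?_, ?_⟩
    · rw [v, Finset.sum_insert hnotmem, ← v, hp, ha0]; push_cast; ring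
    · rw [w, Finset.sum_insert hnotmem, ← w, hq, hb0]; push_cast; ring

lemma phi_cube : φ ^ 3 = 2*φ + 1 := by linear_combination (φ + 1) * phi_sq

lemma v_erase {S : Finset ℤ} {m : ℤ} (h : m ∈ S) : v (S.erase m) = v S - φ ^ m := by
  rw [v, v]; exact Finset.sum_erase_eq_sub h

lemma zpow_shift (j : ℤ) (k : ℕ) : φ ^ (j + (k:ℤ)) = φ ^ j * φ ^ k := by
  rw [zpow_add₀ phi_ne, zpow_natCast]

/-- adding φ^j below existing digits, with two free slots above -/
lemma down : ∀ (n : ℕ) (S : Finset ℤ) (j : ℤ), (S.filter (fun i => i ≤ j)).card ≤ n →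
    NoAdj S → j + 1 ∉ S → j + 2 ∉ S →
    ∃ T : Finset ℤ, NoAdj T ∧ v T = v S + φ ^ j ∧ ∀ i, j + 1 < i → (i ∈ T ↔ i ∈ S) := by
  intro n
  induction n with
  | zero =>
    intro S j hc hna hj1 hj2
    have hemp : S.filter (fun i => i ≤ j) = ∅ := Finset.card_eq_zero.mp (Nat.le_zero.mp hc)
    have hj : j ∉ S := by
      intro h; have : j ∈ S.filter (fun i => i ≤ j) := Finset.mem_filter.mpr ⟨h, le_rfl⟩
      rw [hemp] at this; exact absurd this (Finset.notMem_empty j)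
    have hjm : j - 1 ∉ S := by
      intro h; have : j - 1 ∈ S.filter (fun i => i ≤ j) := Finset.mem_filter.mpr ⟨h, by omega⟩
      rw [hemp] at this; exact absurd this (Finset.notMem_empty _)
    refine ⟨insert j S, ?_, ?_, ?_⟩
    · intro i hi
      rcases Finset.mem_insert.mp hi with rfl | hiS
      · intro hcon
        rcases Finset.mem_insert.mp hcon with h | h
        · omega
        · exact hj1 h
      · intro hcon
        rcases Finset.mem_insert.mp hcon with h | h
        · exact hjm (by rw [show j - 1 = i by omega]; exact hiS)
        · exact hna i hiS h
    · rw [v, Finset.sum_insert hj, ← v]; ring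
    · intro i hi; simp only [Finset.mem_insert]
      constructor
      · rintro (rfl | h); · omega
        · exact h
      · intro h; exact Or.inr h
  | succ n ih =>
    intro S j hc hna hj1 hj2
    by_cases hj : j ∈ S
    · set S₂ : Finset ℤ := insert (j+1) (S.erase j) with hS₂
      have hjm1 : j - 1 ∉ S := fun h => hna (j-1) h (by rw [show j-1+1 = j by ring]; exact hj)
      have hna₂ : NoAdj S₂ := by
        intro i hi hcon
        rcases Finset.mem_insert.mp hi with rfl | hiE
        · rcases Finset.mem_insert.mp hcon with h | h
          · omega
          · exact hj2 (by rw [show j + 2 = j + 1 + 1 by ring]; exact Finset.mem_of_mem_erase h)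
        · have hiS := Finset.mem_of_mem_erase hiE
          rcases Finset.mem_insert.mp hcon with h | h
          · have : i = j := by omega
            exact (Finset.ne_of_mem_erase hiE) this
          · exact hna i hiS (Finset.mem_of_mem_erase h)
      have hpre1 : (j-2) + 1 ∉ S₂ := by
        rw [show j-2+1 = j-1 by ring]
        intro h
        rcases Finset.mem_insert.mp h with h' | h'
        · omega
        · exact hjm1 (Finset.mem_of_mem_erase h')
      have hpre2 : (j-2) + 2 ∉ S₂ := by
        rw [show j-2+2 = j by ring]
        intro h
        rcases Finset.mem_insert.mp h with h' | h'
        · omega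
        · exact (Finset.ne_of_mem_erase h') rfl
      have hmeas : (S₂.filter (fun i => i ≤ j - 2)).card ≤ n := by
        have heq : S₂.filter (fun i => i ≤ j - 2) = S.filter (fun i => i ≤ j - 2) := by
          ext i
          simp only [hS₂, Finset.mem_filter, Finset.mem_insert, Finset.mem_erase]
          constructor
          · rintro ⟨rfl | ⟨hne, hS⟩, hle⟩
            · omega
            · exact ⟨hS, hle⟩
          · rintro ⟨hS, hle⟩
            exact ⟨Or.inr ⟨by omega, hS⟩, hle⟩
        have hsub : S.filter (fun i => i ≤ j - 2) ⊆ (S.filter (fun i => i ≤ j)).erase j := by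
          intro i hi
          obtain ⟨hiS, hle⟩ := Finset.mem_filter.mp hi
          exact Finset.mem_erase.mpr ⟨by omega, Finset.mem_filter.mpr ⟨hiS, by omega⟩⟩
        have hjf : j ∈ S.filter (fun i => i ≤ j) := Finset.mem_filter.mpr ⟨hj, le_rfl⟩
        calc (S₂.filter (fun i => i ≤ j - 2)).card
            = (S.filter (fun i => i ≤ j - 2)).card := by rw [heq]
          _ ≤ ((S.filter (fun i => i ≤ j)).erase j).card := Finset.card_le_card hsub
          _ = (S.filter (fun i => i ≤ j)).card - 1 := Finset.card_erase_of_mem hjf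
          _ ≤ n := by omega
      obtain ⟨T, hTna, hTv, hTpres⟩ := ih S₂ (j-2) hmeas hna₂ hpre1 hpre2
      have hj1ne : j + 1 ∉ S.erase j := fun h => hj1 (Finset.mem_of_mem_erase h)
      have hv₂ : v S₂ = v S - φ ^ j + φ ^ (j+1) := by
        rw [hS₂, v, Finset.sum_insert hj1ne, Finset.sum_erase_eq_sub hj, ← v]; ring
      refine ⟨T, hTna, ?_, ?_⟩
      · rw [hTv, hv₂]
        have e1 : φ ^ (j+1) = φ ^ (j-2) * φ ^ 3 := by
          rw [← zpow_shift]; ring_nf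
        have e2 : φ ^ j = φ ^ (j-2) * φ ^ 2 := by
          rw [← zpow_shift]; ring_nf
        rw [e1, e2, phi_cube, phi_sq]; ring
      · intro i hi
        rw [hTpres i (by omega)]
        simp only [hS₂, Finset.mem_insert, Finset.mem_erase]
        constructor
        · rintro (rfl | ⟨_, h⟩)
          · omega
          · exact h
        · intro h; exact Or.inr ⟨by omega, h⟩
    · by_cases hjm : j - 1 ∈ S
      · have hj1e : j + 1 ∉ S.erase (j-1) := fun h => hj1 (Finset.mem_of_mem_erase h)
        refine ⟨insert (j+1) (S.erase (j-1)), ?_, ?_, ?_⟩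
        · intro i hi hcon
          rcases Finset.mem_insert.mp hi with rfl | hiE
          · rcases Finset.mem_insert.mp hcon with h | h
            · omega
            · exact hj2 (by rw [show j + 2 = j + 1 + 1 by ring]; exact Finset.mem_of_mem_erase h)
          · have hiS := Finset.mem_of_mem_erase hiE
            rcases Finset.mem_insert.mp hcon with h | h
            · have : i = j := by omega
              exact hj (this ▸ hiS)
            · exact hna i hiS (Finset.mem_of_mem_erase h)
        · rw [v, Finset.sum_insert hj1e, Finset.sum_erase_eq_sub hjm, ← v]
          have e1 : φ ^ (j+1) = φ ^ (j-1) * φ ^ 2 := by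
            rw [← zpow_shift]; ring_nf
          have e2 : φ ^ j = φ ^ (j-1) * φ ^ 1 := by
            rw [← zpow_shift]; ring_nf
          rw [e1, e2, phi_sq]; ring
        · intro i hi
          simp only [Finset.mem_insert, Finset.mem_erase]
          constructor
          · rintro (rfl | ⟨_, h⟩)
            · omega
            · exact h
          · intro h; exact Or.inr ⟨by omega, h⟩
      · refine ⟨insert j S, ?_, ?_, ?_⟩
        · intro i hi hcon
          rcases Finset.mem_insert.mp hi with rfl | hiS
          · rcases Finset.mem_insert.mp hcon with h | h
            · omega
            · exact hj1 h
          · rcases Finset.mem_insert.mp hcon with h | h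
            · exact hjm (by rw [show j - 1 = i by omega]; exact hiS)
            · exact hna i hiS h
        · rw [v, Finset.sum_insert hj, ← v]; ring
        · intro i hi; simp only [Finset.mem_insert]
          constructor
          · rintro (rfl | h)
            · omega
            · exact h
          · exact Or.inr

/-- adding φ^k to a no-adjacent digit set -/
lemma addPow : ∀ (n : ℕ) (S : Finset ℤ) (k : ℤ), (S.filter (fun i => k - 1 ≤ i)).card ≤ n →
    NoAdj S → ∃ T : Finset ℤ, NoAdj T ∧ v T = v S + φ ^ k := by
  intro n
  induction n with
  | zero =>
    intro S k hc hna
    have hemp : S.filter (fun i => k - 1 ≤ i) = ∅ := Finset.card_eq_zero.mp (Nat.le_zero.mp hc)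
    have hnot : ∀ i, k - 1 ≤ i → i ∉ S := by
      intro i hle hi
      have : i ∈ S.filter (fun i => k - 1 ≤ i) := Finset.mem_filter.mpr ⟨hi, hle⟩
      rw [hemp] at this; exact absurd this (Finset.notMem_empty _)
    have hk : k ∉ S := hnot k (by omega)
    refine ⟨insert k S, ?_, ?_⟩
    · intro i hi hcon
      rcases Finset.mem_insert.mp hi with rfl | hiS
      · rcases Finset.mem_insert.mp hcon with h | h
        · omega
        · exact hnot _ (by omega) h
      · rcases Finset.mem_insert.mp hcon with h | h
        · exact hnot (k-1) le_rfl (by rw [show k - 1 = i by omega]; exact hiS)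
        · exact hna i hiS h
    · rw [v, Finset.sum_insert hk, ← v]; ring
  | succ n ih =>
    intro S k hc hna
    by_cases h1 : k + 1 ∈ S
    · have hmeas : ((S.erase (k+1)).filter (fun i => k + 2 - 1 ≤ i)).card ≤ n := by
        have hsub : (S.erase (k+1)).filter (fun i => k + 2 - 1 ≤ i) ⊆
            (S.filter (fun i => k - 1 ≤ i)).erase (k+1) := by
          intro i hi
          obtain ⟨hiE, hle⟩ := Finset.mem_filter.mp hi
          exact Finset.mem_erase.mpr ⟨Finset.ne_of_mem_erase hiE,
            Finset.mem_filter.mpr ⟨Finset.mem_of_mem_erase hiE, by omega⟩⟩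
        have hin : k + 1 ∈ S.filter (fun i => k - 1 ≤ i) :=
          Finset.mem_filter.mpr ⟨h1, by omega⟩
        calc ((S.erase (k+1)).filter (fun i => k + 2 - 1 ≤ i)).card
            ≤ ((S.filter (fun i => k - 1 ≤ i)).erase (k+1)).card := Finset.card_le_card hsub
          _ = (S.filter (fun i => k - 1 ≤ i)).card - 1 := Finset.card_erase_of_mem hin
          _ ≤ n := by omega
      obtain ⟨T, hTna, hTv⟩ := ih (S.erase (k+1)) (k+2) hmeas
        (hna.subset (Finset.erase_subset _ _))
      refine ⟨T, hTna, ?_⟩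
      rw [hTv, v_erase h1]
      have e1 : φ ^ (k+1) = φ ^ k * φ ^ 1 := by rw [← zpow_shift]; norm_num
      have e2 : φ ^ (k+2) = φ ^ k * φ ^ 2 := by rw [← zpow_shift]; norm_num
      rw [e1, e2, phi_sq]; ring
    · by_cases h0 : k ∈ S
      · have hkm : k - 1 ∉ S := fun h => hna (k-1) h (by rw [show k-1+1 = k by ring]; exact h0)
        have hpre1 : (k-2) + 1 ∉ S.erase k := by
          rw [show k-2+1 = k-1 by ring]
          exact fun h => hkm (Finset.mem_of_mem_erase h)
        have hpre2 : (k-2) + 2 ∉ S.erase k := by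
          rw [show k-2+2 = k by ring]
          exact fun h => (Finset.ne_of_mem_erase h) rfl
        obtain ⟨T₁, hT₁na, hT₁v, hT₁pres⟩ := down ((S.erase k).filter (fun i => i ≤ k - 2)).card
          (S.erase k) (k-2) le_rfl (hna.subset (Finset.erase_subset _ _)) hpre1 hpre2
        have hmeas : (T₁.filter (fun i => k + 1 - 1 ≤ i)).card ≤ n := by
          have heq : T₁.filter (fun i => k + 1 - 1 ≤ i) =
              (S.erase k).filter (fun i => k + 1 - 1 ≤ i) := by
            ext i
            simp only [Finset.mem_filter]
            constructor
            · rintro ⟨hi, hle⟩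
              exact ⟨(hT₁pres i (by omega)).mp hi, hle⟩
            · rintro ⟨hi, hle⟩
              exact ⟨(hT₁pres i (by omega)).mpr hi, hle⟩
          have hsub : (S.erase k).filter (fun i => k + 1 - 1 ≤ i) ⊆
              (S.filter (fun i => k - 1 ≤ i)).erase k := by
            intro i hi
            obtain ⟨hiE, hle⟩ := Finset.mem_filter.mp hi
            exact Finset.mem_erase.mpr ⟨Finset.ne_of_mem_erase hiE,
              Finset.mem_filter.mpr ⟨Finset.mem_of_mem_erase hiE, by omega⟩⟩
          have hin : k ∈ S.filter (fun i => k - 1 ≤ i) :=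
            Finset.mem_filter.mpr ⟨h0, by omega⟩
          calc (T₁.filter (fun i => k + 1 - 1 ≤ i)).card
              = ((S.erase k).filter (fun i => k + 1 - 1 ≤ i)).card := by rw [heq]
            _ ≤ ((S.filter (fun i => k - 1 ≤ i)).erase k).card := Finset.card_le_card hsub
            _ = (S.filter (fun i => k - 1 ≤ i)).card - 1 := Finset.card_erase_of_mem hin
            _ ≤ n := by omega
        obtain ⟨T, hTna, hTv⟩ := ih T₁ (k+1) hmeas hT₁na
        refine ⟨T, hTna, ?_⟩
        rw [hTv, hT₁v, v_erase h0]
        show v S - φ ^ k + φ ^ (k-2) + φ ^ (k+1) = v S + φ ^ k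
        have e1 : φ ^ (k+1) = φ ^ (k-2) * φ ^ 3 := by rw [← zpow_shift]; ring_nf
        have e2 : φ ^ k = φ ^ (k-2) * φ ^ 2 := by rw [← zpow_shift]; ring_nf
        rw [e1, e2, phi_cube, phi_sq]; ring
      · by_cases hm : k - 1 ∈ S
        · have hmeas : ((S.erase (k-1)).filter (fun i => k + 1 - 1 ≤ i)).card ≤ n := by
            have hsub : (S.erase (k-1)).filter (fun i => k + 1 - 1 ≤ i) ⊆
                (S.filter (fun i => k - 1 ≤ i)).erase (k-1) := by
              intro i hi
              obtain ⟨hiE, hle⟩ := Finset.mem_filter.mp hi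
              exact Finset.mem_erase.mpr ⟨Finset.ne_of_mem_erase hiE,
                Finset.mem_filter.mpr ⟨Finset.mem_of_mem_erase hiE, by omega⟩⟩
            have hin : k - 1 ∈ S.filter (fun i => k - 1 ≤ i) :=
              Finset.mem_filter.mpr ⟨hm, le_rfl⟩
            calc ((S.erase (k-1)).filter (fun i => k + 1 - 1 ≤ i)).card
                ≤ ((S.filter (fun i => k - 1 ≤ i)).erase (k-1)).card := Finset.card_le_card hsub
              _ = (S.filter (fun i => k - 1 ≤ i)).card - 1 := Finset.card_erase_of_mem hin
              _ ≤ n := by omega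
          obtain ⟨T, hTna, hTv⟩ := ih (S.erase (k-1)) (k+1) hmeas
            (hna.subset (Finset.erase_subset _ _))
          refine ⟨T, hTna, ?_⟩
          rw [hTv, v_erase hm]
          show v S - φ ^ (k-1) + φ ^ (k+1) = v S + φ ^ k
          have e1 : φ ^ (k+1) = φ ^ (k-1) * φ ^ 2 := by rw [← zpow_shift]; ring_nf
          have e2 : φ ^ k = φ ^ (k-1) * φ ^ 1 := by rw [← zpow_shift]; ring_nf
          rw [e1, e2, phi_sq]; ring
        · refine ⟨insert k S, ?_, ?_⟩
          · intro i hi hcon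
            rcases Finset.mem_insert.mp hi with rfl | hiS
            · rcases Finset.mem_insert.mp hcon with h | h
              · omega
              · exact h1 h
            · rcases Finset.mem_insert.mp hcon with h | h
              · exact hm (by rw [show k - 1 = i by omega]; exact hiS)
              · exact hna i hiS h
          · rw [v, Finset.sum_insert h0, ← v]; ring

lemma exists_noadj (N : ℕ) : ∃ S : Finset ℤ, NoAdj S ∧ v S = N := by
  induction N with
  | zero => exact ⟨∅, fun i hi => absurd hi (Finset.notMem_empty i), by simp [v]⟩
  | succ N ih =>
    obtain ⟨S, hna, hv⟩ := ih
    obtain ⟨T, hTna, hTv⟩ := addPow (S.filter (fun i => (0:ℤ) - 1 ≤ i)).card S 0 le_rfl hna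
    exact ⟨T, hTna, by rw [hTv, hv, zpow_zero]; push_cast; ring⟩

lemma exists_bergman (N : ℕ) : ∃ c : ℤ →₀ ℕ, IsBergman N c := by
  obtain ⟨S, hna, hv⟩ := exists_noadj N
  refine ⟨⟨S, fun i => if i ∈ S then 1 else 0,
    by intro a; by_cases h : a ∈ S <;> simp [h]⟩, ⟨?_, ?_⟩, ?_⟩
  · intro i; show (if i ∈ S then 1 else 0) ≤ 1; split_ifs <;> norm_num
  · rw [Finsupp.sum]
    show (∑ i ∈ S, (((if i ∈ S then 1 else 0 : ℕ)) : ℝ) * goldenPhi ^ i) = N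
    rw [gp_eq, ← hv, v]
    apply Finset.sum_congr rfl
    intro i hi
    rw [if_pos hi]; norm_num
  · intro i
    show (if i + 1 ∈ S then 1 else 0) * (if i ∈ S then 1 else 0) = 0
    by_cases h : i + 1 ∈ S
    · have hni : i ∉ S := fun hi => hna i hi h
      rw [if_neg hni, Nat.mul_zero]
    · rw [if_neg h, Nat.zero_mul]

lemma rep_value (N : ℕ) (c : ℤ →₀ ℕ) (hrep : IsPhiRep N c) : (N:ℝ) = v c.support := by
  have h := hrep.2
  rw [Finsupp.sum, gp_eq] at h
  rw [← h, v]
  apply Finset.sum_congr rfl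
  intro i hi
  have h1 : c i = 1 := le_antisymm (hrep.1 i)
    (Nat.one_le_iff_ne_zero.mpr (Finsupp.mem_support_iff.mp hi))
  rw [h1]; norm_num

lemma rep_pair (c : ℤ →₀ ℕ) (hadm : ∀ i : ℤ, i ≠ 0 → c (i + 1) * c i = 0) :
    ∀ i : ℤ, i ≠ 0 → i ∈ c.support → i + 1 ∉ c.support := by
  intro i hi0 hiS hi1S
  rcases Nat.mul_eq_zero.mp (hadm i hi0) with h | h
  · exact (Finsupp.mem_support_iff.mp hi1S) h
  · exact (Finsupp.mem_support_iff.mp hiS) h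

lemma case1 (N : ℕ) (c : ℤ →₀ ℕ) (hrep : IsPhiRep N c)
    (hadm : ∀ i : ℤ, i ≠ 0 → c (i + 1) * c i = 0) (hm1 : c (-1) = 1) :
    ∃ p q : ℕ, (N:ℝ) - 1 < p + q * φ ∧ (p:ℝ) + q * φ ≤ N + 1 - φ ∧
      -1 < (p:ℝ) + q * ψ ∧ (p:ℝ) + q * ψ < φ - 1 := by
  have hN := rep_value N c hrep
  have hpair := rep_pair c hadm
  set S := c.support with hS
  set Sp := S.filter (fun i => 0 ≤ i) with hSp
  set Sm := S.filter (fun i => ¬ 0 ≤ i) with hSm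
  have hsplit : v Sp + v Sm = v S := Finset.sum_filter_add_sum_filter_not S _ _
  have hSmna : NoAdj Sm := by
    intro i hi hcon
    obtain ⟨hiS, hneg⟩ := Finset.mem_filter.mp hi
    exact hpair i (by omega) hiS (Finset.mem_filter.mp hcon).1
  have hx0 : 0 ≤ v Sm := v_nonneg Sm
  have hx1 : v Sm < 1 := by
    have := v_lt Sm.card Sm (-1) le_rfl hSmna
      (fun i hi => by have := (Finset.mem_filter.mp hi).2; omega)
    rwa [show (-1:ℤ) + 1 = 0 by ring, zpow_zero] at this
  have hm1S : (-1:ℤ) ∈ Sm := Finset.mem_filter.mpr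
    ⟨Finsupp.mem_support_iff.mpr (by rw [hm1]; exact one_ne_zero), by norm_num⟩
  have hxlb : φ - 1 ≤ v Sm := by
    have := v_ge_of_mem hm1S; rwa [zpow_neg_one_phi] at this
  have hc0 : c 0 = 0 := by
    have h := hadm (-1) (by norm_num)
    rw [show (-1:ℤ) + 1 = 0 by ring, hm1, Nat.mul_one] at h
    exact h
  have hSp1 : ∀ i ∈ Sp, 1 ≤ i := by
    intro i hi
    obtain ⟨hiS, hge⟩ := Finset.mem_filter.mp hi
    have : i ≠ 0 := by
      intro h; exact (Finsupp.mem_support_iff.mp hiS) (h ▸ hc0)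
    omega
  have hSpna : NoAdj Sp := by
    intro i hi hcon
    obtain ⟨hiS, _⟩ := Finset.mem_filter.mp hi
    exact hpair i (by have := hSp1 i hi; omega) hiS (Finset.mem_filter.mp hcon).1
  obtain ⟨p, q, hp, hq⟩ := finset_pq Sp (fun i hi => by have := hSp1 i hi; omega)
  obtain ⟨hw1, hw2⟩ := w_bounds_one hSpna hSp1
  rw [hq] at hw1 hw2
  have hNs : (N:ℝ) = (p + q * φ) + v Sm := by rw [hN, ← hsplit, hp]
  exact ⟨p, q, by linarith, by linarith, hw1, hw2⟩

lemma case0 (N : ℕ) (c : ℤ →₀ ℕ) (hrep : IsPhiRep N c)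
    (hadm : ∀ i : ℤ, i ≠ 0 → c (i + 1) * c i = 0) (hm0 : c (-1) = 0) :
    ∃ p q : ℕ, (N:ℝ) + 1 - φ < p + q * φ ∧ (p:ℝ) + q * φ ≤ N ∧
      -1 < (p:ℝ) + q * ψ ∧ (p:ℝ) + q * ψ < φ := by
  have hN := rep_value N c hrep
  have hpair := rep_pair c hadm
  set S := c.support with hS
  set Sp := S.filter (fun i => 0 ≤ i) with hSp
  set Sm := S.filter (fun i => ¬ 0 ≤ i) with hSm
  have hsplit : v Sp + v Sm = v S := Finset.sum_filter_add_sum_filter_not S _ _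
  have hSmna : NoAdj Sm := by
    intro i hi hcon
    obtain ⟨hiS, hneg⟩ := Finset.mem_filter.mp hi
    exact hpair i (by omega) hiS (Finset.mem_filter.mp hcon).1
  have hx0 : 0 ≤ v Sm := v_nonneg Sm
  have hm1S : (-1:ℤ) ∉ S := fun h => (Finsupp.mem_support_iff.mp h) hm0
  have hx1 : v Sm < φ - 1 := by
    have := v_lt Sm.card Sm (-2) le_rfl hSmna ?_
    · rwa [show (-2:ℤ) + 1 = -1 by ring, zpow_neg_one_phi] at this
    · intro i hi
      obtain ⟨hiS, hneg⟩ := Finset.mem_filter.mp hi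
      have : i ≠ -1 := fun h => hm1S (h ▸ hiS)
      omega
  have hSp0 : ∀ i ∈ Sp, 0 ≤ i := fun i hi => (Finset.mem_filter.mp hi).2
  have hwb : -1 < w Sp ∧ w Sp < φ := by
    by_cases hexc : c 1 = 1 ∧ c 0 = 1
    · have h0 : (0:ℤ) ∈ Sp := Finset.mem_filter.mpr
        ⟨Finsupp.mem_support_iff.mpr (by rw [hexc.2]; exact one_ne_zero), le_rfl⟩
      have h1 : (1:ℤ) ∈ Sp := Finset.mem_filter.mpr
        ⟨Finsupp.mem_support_iff.mpr (by rw [hexc.1]; exact one_ne_zero), by norm_num⟩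
      have hc2 : c 2 = 0 := by
        have h := hadm 1 one_ne_zero
        rw [show (1:ℤ) + 1 = 2 by ring, hexc.1, Nat.mul_one] at h
        exact h
      have h2 : (2:ℤ) ∉ Sp := by
        intro h
        exact (Finsupp.mem_support_iff.mp (Finset.mem_filter.mp h).1) hc2
      have hena : NoAdj (Sp.erase 0) := by
        intro i hi hcon
        have hiSp := Finset.mem_of_mem_erase hi
        have hine := Finset.ne_of_mem_erase hi
        exact hpair i hine (Finset.mem_filter.mp hiSp).1
          (Finset.mem_filter.mp (Finset.mem_of_mem_erase hcon)).1
      exact w_bounds_exc h0 h1 h2 hena hSp0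
    · have hSpna : NoAdj Sp := by
        intro i hi hcon
        obtain ⟨hiS, hge⟩ := Finset.mem_filter.mp hi
        by_cases hi0 : i = 0
        · subst hi0
          apply hexc
          have hc1 : c 1 ≠ 0 := Finsupp.mem_support_iff.mp
            (Finset.mem_filter.mp (by rwa [zero_add] at hcon)).1
          have hc0 : c 0 ≠ 0 := Finsupp.mem_support_iff.mp hiS
          exact ⟨le_antisymm (hrep.1 1) (Nat.one_le_iff_ne_zero.mpr hc1),
            le_antisymm (hrep.1 0) (Nat.one_le_iff_ne_zero.mpr hc0)⟩
        · exact hpair i hi0 hiS (Finset.mem_filter.mp hcon).1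
      exact w_bounds_zero hSpna hSp0
  obtain ⟨p, q, hp, hq⟩ := finset_pq Sp hSp0
  rw [hq] at hwb
  have hNs : (N:ℝ) = (p + q * φ) + v Sm := by rw [hN, ← hsplit, hp]
  exact ⟨p, q, by linarith [hwb.1], by linarith, hwb.1, hwb.2⟩

lemma goalA (N : ℕ) (p q : ℕ)
    (h1 : (N:ℝ) - 1 < p + q * φ) (h2 : (p:ℝ) + q * φ ≤ N + 1 - φ)
    (h3 : (-1:ℝ) < p + q * ψ) (h4 : (p:ℝ) + q * ψ < φ - 1) :
    ∃ n : ℕ, 1 ≤ n ∧ (N : ℤ) = 3 * ⌊(n : ℝ) * goldenPhi⌋ + n + 1 := by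
  have hPW : ((p:ℝ) + q * φ) + ((p:ℝ) + q * ψ) = 2 * p + q := by
    linear_combination (q:ℝ) * phi_psi
  set W : ℝ := (p:ℝ) + q * ψ with hW
  set t : ℤ := 2 * p + q + 1 - N with ht
  have htr : (t:ℝ) = 2 * p + q + 1 - N := by push_cast [ht]; ring
  have ht1 : W < t := by rw [htr]; linarith
  have ht2 : (t:ℝ) ≤ W + 2 - φ := by rw [htr]; linarith
  have ht0 : t = 0 := by
    have l1 : (-1:ℝ) < t := lt_trans h3 ht1
    have l2 : (t:ℝ) < 1 := by linarith
    have l1' : (-1:ℤ) < t := by exact_mod_cast l1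
    have l2' : t < 1 := by exact_mod_cast l2
    omega
  have hNr : (N:ℝ) = 2 * p + q + 1 := by
    rw [ht0] at htr; push_cast at htr; linarith
  have hW0 : W < 0 := by rw [ht0] at ht1; exact_mod_cast ht1
  have hWl : φ - 2 ≤ W := by
    rw [ht0] at ht2; push_cast at ht2; linarith
  have hfW : φ * W = p * φ - q := by
    rw [hW]; linear_combination (q:ℝ) * phi_mul_psi
  have hq_gt : (p:ℝ) * φ < q := by nlinarith [phi_pos]
  have hql : (1:ℝ) - φ ≤ (p:ℝ) * φ - q := by nlinarith [phi_pos, phi_sq]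
  have hp1 : 1 ≤ p := by
    rcases Nat.eq_zero_or_pos p with h | h
    · exfalso
      subst h
      have hq1 : 1 ≤ q := by
        by_contra hq
        have : q = 0 := by omega
        subst this
        norm_num at hq_gt
      have : W = q * ψ := by rw [hW]; push_cast; ring
      have hqq : (q:ℝ) * ψ ≤ 1 * ψ := by
        apply mul_le_mul_of_nonpos_right _ (le_of_lt Real.goldenConj_neg)
        exact_mod_cast hq1
      rw [psi_val] at hqq
      rw [this] at hWl
      linarith [phi_gt]
    · omega
  have hqp : p + 1 ≤ q := by
    have : (p:ℝ) < q := by nlinarith [phi_gt]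
    have : p < q := by exact_mod_cast this
    omega
  set n : ℕ := q - p with hn
  have hn1 : 1 ≤ n := by omega
  have hnr : (n:ℝ) = (q:ℝ) - p := by
    rw [hn]; push_cast [Nat.cast_sub (by omega : p ≤ q)]; ring
  have hlow : (p:ℝ) < n * φ := by
    rw [hnr]
    nlinarith [phi_pos, phi_sq]
  have hupper : (n:ℝ) * φ < p + 1 := by
    have hle : (n:ℝ) * φ ≤ p + 1 := by
      rw [hnr]
      nlinarith [phi_pos, phi_sq]
    rcases lt_or_eq_of_le hle with h | h
    · exact h
    · exfalso
      have hirr : Irrational ((n:ℝ) * φ) := Real.goldenRatio_irrational.natCast_mul (by omega)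
      exact hirr.ne_int ((p:ℤ) + 1) (by push_cast; linarith)
  have hfl : ⌊(n : ℝ) * goldenPhi⌋ = (p:ℤ) := by
    rw [gp_eq]
    rw [Int.floor_eq_iff]
    constructor
    · push_cast; linarith
    · push_cast; linarith
  refine ⟨n, hn1, ?_⟩
  rw [hfl]
  have hNn : N = 2 * p + q + 1 := by exact_mod_cast hNr
  have : (q:ℤ) = p + n := by push_cast [hn]; omega
  omega

lemma boxA (n : ℕ) (hn : 1 ≤ n) (N : ℕ)
    (hNeq : (N : ℤ) = 3 * ⌊(n : ℝ) * goldenPhi⌋ + n + 1) :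
    ∃ p q : ℤ, (N:ℝ) - 1 < p + q * φ ∧ (p:ℝ) + q * φ ≤ N + 1 - φ ∧
      -1 < (p:ℝ) + q * ψ ∧ (p:ℝ) + q * ψ < φ - 1 := by
  set m : ℤ := ⌊(n : ℝ) * goldenPhi⌋ with hm
  have hmle : (m:ℝ) ≤ n * φ := by rw [hm, gp_eq]; exact Int.floor_le _
  have hml : (m:ℝ) < n * φ := by
    rcases lt_or_eq_of_le hmle with h | h
    · exact h
    · exfalso
      have hirr : Irrational ((n:ℝ) * φ) := Real.goldenRatio_irrational.natCast_mul (by omega)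
      exact hirr.ne_int m h.symm
  have hmu : (n:ℝ) * φ < m + 1 := by
    rw [hm, gp_eq]; exact Int.lt_floor_add_one _
  have hNr : (N:ℝ) = 3 * m + n + 1 := by exact_mod_cast hNeq
  have hWphi : φ * ((m:ℝ) + (m + n) * ψ) = m * φ - (m + n) := by
    push_cast; linear_combination ((m:ℝ) + n) * phi_mul_psi
  have hphi1 : (0:ℝ) < φ - 1 := by linarith [phi_gt]
  have he : (n:ℝ) * φ * (φ - 1) = n := by linear_combination (n:ℝ) * phi_sq
  have hW1 : φ * ((m:ℝ) + (m + n) * ψ) < 0 := by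
    have key := mul_lt_mul_of_pos_right hml hphi1
    rw [hWphi]; push_cast; nlinarith [key, he]
  have hW2 : (1:ℝ) - φ < φ * ((m:ℝ) + (m + n) * ψ) := by
    have hml2 : (n:ℝ) * φ - 1 < m := by linarith
    have key := mul_lt_mul_of_pos_right hml2 hphi1
    rw [hWphi]; push_cast; nlinarith [key, he]
  have hWu : (m:ℝ) + (m + n) * ψ < 0 := by
    by_contra hcon
    push_neg at hcon
    have : 0 ≤ φ * ((m:ℝ) + (m + n) * ψ) := mul_nonneg phi_pos.le hcon
    linarith
  have hWd : φ - 2 < (m:ℝ) + (m + n) * ψ := by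
    by_contra hcon
    push_neg at hcon
    have key := mul_le_mul_of_nonneg_left hcon phi_pos.le
    have he2 : φ * (φ - 2) = 1 - φ := by linear_combination phi_sq
    rw [he2] at key
    linarith
  have hsum : ((m:ℝ) + ((m:ℝ) + n) * φ) + ((m:ℝ) + ((m:ℝ) + n) * ψ) = (N:ℝ) - 1 := by
    rw [hNr]; linear_combination ((m:ℝ) + n) * phi_psi
  refine ⟨m, m + n, ?_, ?_, ?_, ?_⟩
  · push_cast; linarith
  · push_cast; linarith [phi_lt]
  · push_cast; linarith [phi_gt]
  · push_cast; linarith [phi_gt]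

lemma disj (N : ℕ) (p q p' q' : ℤ)
    (a1 : (N:ℝ) - 1 < p + q * φ) (a2 : (p:ℝ) + q * φ ≤ N + 1 - φ)
    (a3 : (-1:ℝ) < p + q * ψ) (a4 : (p:ℝ) + q * ψ < φ - 1)
    (b1 : (N:ℝ) + 1 - φ < p' + q' * φ) (b2 : (p':ℝ) + q' * φ ≤ N)
    (b3 : (-1:ℝ) < p' + q' * ψ) (b4 : (p':ℝ) + q' * ψ < φ) : False := by
  set a : ℤ := p - p' with ha
  set b : ℤ := q - q' with hb
  have har : (a:ℝ) = p - p' := by push_cast [ha]; ring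
  have hbr : (b:ℝ) = q - q' := by push_cast [hb]; ring
  have hu1 : (-1:ℝ) < a + b * φ := by rw [har, hbr]; linarith
  have hu2 : (a:ℝ) + b * φ < 0 := by rw [har, hbr]; linarith
  have hv1 : (-1:ℝ) - φ < a + b * ψ := by rw [har, hbr]; linarith
  have hv2 : (a:ℝ) + b * ψ < φ := by rw [har, hbr]; linarith
  have hs5 : φ - ψ = Real.sqrt 5 := Real.goldenRatio_sub_goldenConj
  have hdiff : ((a:ℝ) + b * φ) - ((a:ℝ) + b * ψ) = b * Real.sqrt 5 := by
    rw [← hs5]; ring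
  obtain ⟨hsl, hsu⟩ := sqrt5_bounds
  have hbs1 : (b:ℝ) * Real.sqrt 5 < 1 + φ := by rw [← hdiff]; linarith
  have hbs2 : -(1 + φ) < (b:ℝ) * Real.sqrt 5 := by rw [← hdiff]; linarith
  have hb1 : (b:ℝ) < 2 := by
    by_contra hcon
    push_neg at hcon
    have key : (2:ℝ) * Real.sqrt 5 ≤ b * Real.sqrt 5 :=
      mul_le_mul_of_nonneg_right hcon (Real.sqrt_nonneg 5)
    linarith [phi_lt]
  have hb2 : (-2:ℝ) < b := by
    by_contra hcon
    push_neg at hcon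
    have key : (b:ℝ) * Real.sqrt 5 ≤ (-2) * Real.sqrt 5 :=
      mul_le_mul_of_nonneg_right hcon (Real.sqrt_nonneg 5)
    linarith [phi_lt]
  have hb1' : b < 2 := by exact_mod_cast hb1
  have hb2' : -2 < b := by exact_mod_cast hb2
  interval_cases b
  · -- b = -1
    have ha1 : (a:ℝ) < φ := by push_cast at hu2 ⊢; linarith
    have ha2 : φ - 1 < (a:ℝ) := by push_cast at hu1 ⊢; linarith
    have haa : a = 1 := by
      have l1 : (a:ℝ) < 2 := by linarith [phi_lt]
      have l2 : (0:ℝ) < a := by linarith [phi_gt]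
      have l1' : a < 2 := by exact_mod_cast l1
      have l2' : 0 < a := by exact_mod_cast l2
      omega
    rw [haa] at hv2
    push_cast at hv2
    rw [psi_val] at hv2
    linarith
  · -- b = 0
    push_cast at hu1 hu2
    have l1 : (-1:ℝ) < a := by linarith
    have l2 : (a:ℝ) < 0 := by linarith
    have l1' : (-1:ℤ) < a := by exact_mod_cast l1
    have l2' : a < 0 := by exact_mod_cast l2
    omega
  · -- b = 1
    have ha1 : (a:ℝ) < -φ := by push_cast at hu2 ⊢; linarith
    have ha2 : (-1:ℝ) - φ < a := by push_cast at hu1 ⊢; linarith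
    have haa : a = -2 := by
      have l1 : (a:ℝ) < -1 := by linarith [phi_gt]
      have l2 : (-3:ℝ) < a := by linarith [phi_lt]
      have l1' : a < -1 := by exact_mod_cast l1
      have l2' : -3 < a := by exact_mod_cast l2
      omega
    rw [haa] at hv1
    push_cast at hv1
    rw [psi_val] at hv1
    linarith

end S19

theorem stmt19 (N : ℕ) (hN : 0 < N) :
    canonicalRep N (-1) = 1 ↔
      ∃ n : ℕ, 1 ≤ n ∧ (N : ℤ) = 3 * ⌊(n : ℝ) * goldenPhi⌋ + n + 1 := by
  constructor
  · intro h
    unfold canonicalRep at h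
    by_cases hA : ∃ c, IsAdmissible N c ∧ c 1 = 1 ∧ c 0 = 1
    · rw [dif_pos hA] at h
      obtain ⟨hadm, h1, h0⟩ := hA.choose_spec
      have hcon := hadm.2 (-1) (by norm_num)
      rw [show (-1:ℤ) + 1 = 0 by ring, h0, Nat.one_mul, h] at hcon
      exact absurd hcon one_ne_zero
    · rw [dif_neg hA] at h
      unfold bergmanRep at h
      by_cases hB : ∃ c, IsBergman N c
      · rw [dif_pos hB] at h
        obtain ⟨hrep, hberg⟩ := hB.choose_spec
        obtain ⟨p, q, i1, i2, i3, i4⟩ := S19.case1 N _ hrep (fun i _ => hberg i) h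
        exact S19.goalA N p q i1 i2 i3 i4
      · rw [dif_neg hB] at h
        simp at h
  · rintro ⟨n, hn, hNeq⟩
    obtain ⟨P, Q, j1, j2, j3, j4⟩ := S19.boxA n hn N hNeq
    have key : ∀ c : ℤ →₀ ℕ, IsAdmissible N c → c (-1) = 1 := by
      intro c hc
      rcases Nat.lt_or_ge (c (-1)) 1 with hlt | hge
      · exfalso
        have h0 : c (-1) = 0 := by omega
        obtain ⟨p, q, k1, k2, k3, k4⟩ := S19.case0 N c hc.1 hc.2 h0
        exact S19.disj N P Q (p:ℤ) (q:ℤ) j1 j2 j3 j4 (by exact_mod_cast k1)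
          (by exact_mod_cast k2) (by exact_mod_cast k3) (by exact_mod_cast k4)
      · exact le_antisymm (hc.1.1 _) hge
    unfold canonicalRep
    by_cases hA : ∃ c, IsAdmissible N c ∧ c 1 = 1 ∧ c 0 = 1
    · rw [dif_pos hA]
      exact key _ hA.choose_spec.1
    · rw [dif_neg hA]
      unfold bergmanRep
      have hB : ∃ c, IsBergman N c := S19.exists_bergman N
      rw [dif_pos hB]
      exact key _ ⟨hB.choose_spec.1, fun i _ => hB.choose_spec.2 i⟩
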